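/- arXiv:1108.3261 — 5 statements merged into one kernel-verified Lean document; each statement's English description precedes it below -/
import Mathlib

section
/- Let U be a finite set of monomials in the variables x₁,…,xₙ and let u, v ∈ U with u ≠ v. Then the Janet cones of u and of v with respect to U are disjoint: J(u,U) ∩ J(v,U) = ∅. -/
/-- The variable `i` is Janet-multiplicative for the monomial `u` with respect to the
finite set of monomials `U` (monomials are identified with exponent vectors in `ℕⁿ`). -/
def JanetMult {n : ℕ} (U : Finset (Fin n → ℕ)) (u : Fin n → ℕ) (i : Fin n) : Prop :=
  ∀ v ∈ U, (∀ j, j < i → v j = u j) → v i ≤ u i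

/-- The Janet cone `J(u,U)`: all monomials `u·m` where `m` is a product of
Janet-multiplicative variables of `u` w.r.t. `U`. -/
def JanetCone {n : ℕ} (U : Finset (Fin n → ℕ)) (u : Fin n → ℕ) : Set (Fin n → ℕ) :=
  { w | (∀ i, u i ≤ w i) ∧ ∀ i, u i < w i → JanetMult U u i }

theorem janetCone_disjoint {n : ℕ} (U : Finset (Fin n → ℕ)) (u v : Fin n → ℕ)
    (hu : u ∈ U) (hv : v ∈ U) (huv : u ≠ v) :
    JanetCone U u ∩ JanetCone U v = ∅ := by
  ext w
  simp only [Set.mem_inter_iff, Set.mem_empty_iff_false, iff_false]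
  rintro ⟨⟨hu1, hu2⟩, ⟨hv1, hv2⟩⟩
  have hS : (Finset.univ.filter fun i => u i ≠ v i).Nonempty := by
    by_contra h
    apply huv
    funext i
    by_contra hi
    exact h ⟨i, Finset.mem_filter.mpr ⟨Finset.mem_univ i, hi⟩⟩
  obtain ⟨i, hiS, hmin⟩ : ∃ i ∈ Finset.univ.filter fun i => u i ≠ v i,
      ∀ j ∈ Finset.univ.filter fun i => u i ≠ v i, i ≤ j := by
    exact ⟨_, Finset.min'_mem _ hS, fun j hj => Finset.min'_le _ j hj⟩
  have hne : u i ≠ v i := (Finset.mem_filter.mp hiS).2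
  have heq : ∀ j, j < i → u j = v j := by
    intro j hj
    by_contra hj'
    exact absurd hj (not_lt.mpr (hmin j (Finset.mem_filter.mpr ⟨Finset.mem_univ j, hj'⟩)))
  rcases lt_or_gt_of_ne hne with h | h
  · have : u i < w i := lt_of_lt_of_le h (hv1 i)
    have := hu2 i this v hv (fun j hj => (heq j hj).symm)
    omega
  · have : v i < w i := lt_of_lt_of_le h (hu1 i)
    have := hv2 i this u hu (fun j hj => heq j hj)
    omega
end

section
/- The Janet division satisfies the first axiom of an involutive division: for any finite set U of monomials in x₁,…,xₙ and any u, v ∈ U, if J(u,U) ∩ J(v,U) ≠ ∅ then u ∈ J(v,U) or v ∈ J(u,U). -/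
theorem janet_first_axiom {n : ℕ} (U : Finset (Fin n → ℕ)) (u v : Fin n → ℕ)
    (hu : u ∈ U) (hv : v ∈ U)
    (hne : (JanetCone U u ∩ JanetCone U v).Nonempty) :
    u ∈ JanetCone U v ∨ v ∈ JanetCone U u := by
  obtain ⟨w, hwu, hwv⟩ := hne
  have key : ∀ i : Fin n, (∀ j, j < i → u j = v j) → u i = v i := by
    intro i h
    by_contra hne'
    rcases lt_or_gt_of_ne hne' with hlt | hgt
    · have hm := hwu.2 i (lt_of_lt_of_le hlt (hwv.1 i))
      exact absurd (hm v hv (fun j hj => (h j hj).symm)) (not_le.mpr hlt)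
    · have hm := hwv.2 i (lt_of_lt_of_le hgt (hwu.1 i))
      exact absurd (hm u hu (fun j hj => h j hj)) (not_le.mpr hgt)
  have huv : u = v := by
    have main : ∀ m : ℕ, ∀ i : Fin n, i.val = m → u i = v i := by
      intro m
      induction m using Nat.strong_induction_on with
      | _ m ih =>
        intro i hi
        exact key i (fun j hj => ih j.val (hi ▸ hj) j rfl)
    funext i
    exact main i.val i rfl
  left
  exact ⟨fun i => le_of_eq (congrFun huv i).symm,
    fun i h => absurd h (by simp [congrFun huv i])⟩
end

section
/- The Janet division satisfies the second axiom of an involutive division: for any finite set U of monomials in x₁,…,xₙ and any u, v ∈ U, if v ∈ J(u,U) then every Janet-multiplicative variable of v w.r.t. U is also Janet-multiplicative for u w.r.t. U; consequently J(v,U) ⊆ J(u,U). -/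
theorem janet_second_axiom {n : ℕ} (U : Finset (Fin n → ℕ)) (u v : Fin n → ℕ)
    (hu : u ∈ U) (hv : v ∈ U) (hvu : v ∈ JanetCone U u) :
    (∀ i : Fin n, JanetMult U v i → JanetMult U u i) ∧
      JanetCone U v ⊆ JanetCone U u := by
  obtain ⟨hle, hmul⟩ := hvu
  have heq : v = u := by
    by_contra h
    have hne : ∃ i, v i ≠ u i := Function.ne_iff.mp h
    obtain ⟨i, hi, hmin⟩ := Finset.exists_min_image
      (Finset.univ.filter fun i => v i ≠ u i) id
      (by obtain ⟨i, hi⟩ := hne; exact ⟨i, by simpa using hi⟩)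
    have hine : v i ≠ u i := (Finset.mem_filter.mp hi).2
    have hlt : u i < v i := lt_of_le_of_ne (hle i) (Ne.symm hine)
    have hagree : ∀ j, j < i → v j = u j := by
      intro j hj
      by_contra hj'
      exact absurd (hmin j (Finset.mem_filter.mpr ⟨Finset.mem_univ j, hj'⟩)) (not_le.mpr hj)
    exact absurd (hmul i hlt v hv hagree) (not_le.mpr hlt)
  subst heq
  exact ⟨fun i h => h, subset_rfl⟩
end

section
/- The Janet division is noetherian: for every finite set U of monomials in x₁,…,xₙ there exists a finite set Ũ of monomials with U ⊆ Ũ, such that every element of Ũ is a (conventional) multiple of some element of U, and every monomial that is conventionally divisible by some element of U is Janet-divisible w.r.t. Ũ by some element of Ũ. -/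
theorem janet_noetherian {n : ℕ} (U : Finset (Fin n → ℕ)) :
    ∃ U' : Finset (Fin n → ℕ), U ⊆ U' ∧
      (∀ w ∈ U', ∃ u ∈ U, ∀ i, u i ≤ w i) ∧
      (∀ w : Fin n → ℕ, (∃ u ∈ U, ∀ i, u i ≤ w i) →
        ∃ t ∈ U', w ∈ JanetCone U' t) := by
  classical
  set d : Fin n → ℕ := fun i => U.sup (fun u => u i) with hd
  set U' : Finset (Fin n → ℕ) :=
    (Fintype.piFinset (fun i => Finset.range (d i + 1))).filter
      (fun v => ∃ u ∈ U, ∀ i, u i ≤ v i) with hU'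
  have hmem : ∀ v : Fin n → ℕ, v ∈ U' ↔ (∀ i, v i ≤ d i) ∧ ∃ u ∈ U, ∀ i, u i ≤ v i := by
    intro v
    simp [hU', Finset.mem_filter, Fintype.mem_piFinset, Nat.lt_succ_iff]
  refine ⟨U', ?_, ?_, ?_⟩
  · intro u hu
    exact (hmem u).mpr ⟨fun i => Finset.le_sup (f := fun u => u i) hu, u, hu, fun i => le_rfl⟩
  · intro w hw
    exact ((hmem w).mp hw).2
  · rintro w ⟨u, hu, huw⟩
    have hud : ∀ i, u i ≤ d i := fun i => Finset.le_sup (f := fun u => u i) hu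
    refine ⟨fun i => min (w i) (d i), (hmem _).mpr
      ⟨fun i => min_le_right _ _, u, hu, fun i => le_min (huw i) (hud i)⟩,
      fun i => min_le_left _ _, ?_⟩
    intro i hi v hv _
    have hvd : v i ≤ d i := ((hmem v).mp hv).1 i
    have hi' : min (w i) (d i) < w i := hi
    show v i ≤ min (w i) (d i)
    omega
end

section
/- Local involutivity implies involutivity for Janet division (monomial version): let U be a finite set of monomials in x₁,…,xₙ such that for every u ∈ U and every variable x that is non-multiplicative for u w.r.t. U, the prolongation x·u has a Janet divisor in U (w.r.t. U). Then every monomial that is conventionally divisible by some element of U has a Janet divisor in U (w.r.t. U). -/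
theorem janet_locally_involutive {n : ℕ} (U : Finset (Fin n → ℕ))
    (hloc : ∀ u ∈ U, ∀ i : Fin n, ¬ JanetMult U u i →
      ∃ t ∈ U, u + Pi.single i 1 ∈ JanetCone U t) :
    ∀ w : Fin n → ℕ, (∃ u ∈ U, ∀ i, u i ≤ w i) →
      ∃ t ∈ U, w ∈ JanetCone U t := by
  classical
  haveI : WellFoundedLT (Fin n) := inferInstance
  rintro w ⟨u0, hu0, hd0⟩
  set S := U.filter (fun u => ∀ i, u i ≤ w i) with hS
  have hne : S.Nonempty := ⟨u0, by simp [hS, hu0, hd0]⟩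
  obtain ⟨u, huS, hmax⟩ :=
    S.exists_max_image (fun u => (toLex u : Lex (Fin n → ℕ))) hne
  have huU : u ∈ U := (Finset.mem_filter.mp huS).1
  have hud : ∀ i, u i ≤ w i := (Finset.mem_filter.mp huS).2
  refine ⟨u, huU, hud, ?_⟩
  intro i hlt
  by_contra hi
  obtain ⟨t, htU, htle, htm⟩ := hloc u huU i hi
  have htw : ∀ j, t j ≤ w j := by
    intro j
    have h1 := htle j
    rcases eq_or_ne j i with rfl | hji
    · simp only [Pi.add_apply, Pi.single_eq_same] at h1
      omega
    · simp only [Pi.add_apply, Pi.single_eq_of_ne hji] at h1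
      exact le_trans (by omega) (hud j)
  have htS : t ∈ S := Finset.mem_filter.mpr ⟨htU, htw⟩
  have hle : (toLex t : Lex (Fin n → ℕ)) ≤ toLex u := hmax t htS
  rcases lt_or_eq_of_le hle with hl | he
  · -- t <lex u : first difference k, t k < u k, k is Janet-mult for t, contradiction with u ∈ U
    obtain ⟨k, hk1, hk2⟩ : ∃ k, (∀ j, j < k → t j = u j) ∧ t k < u k := hl
    have hmk : JanetMult U t k := by
      apply htm k
      have h1 := htle k
      rcases eq_or_ne k i with rfl | hki
      · simp only [Pi.add_apply, Pi.single_eq_same]; omega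
      · simp only [Pi.add_apply, Pi.single_eq_of_ne hki]; omega
    have := hmk u huU (fun j hj => (hk1 j hj).symm)
    omega
  · -- t = u : then i would be multiplicative for u
    have htu : t = u := toLex.injective he
    subst htu
    exact hi (htm i (by simp))
end
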